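/- arXiv:2301.05729 — 10 statements merged into one kernel-verified Lean document; each statement's English description precedes it below -/
import Mathlib

section
/- Let Nl and Nh be finite index types, ρ : ℝ, and let Kl : Matrix Nl Nl ℝ, Kr : Matrix Nh Nh ℝ be invertible real matrices (their determinants are units), and E : Matrix Nl Nh ℝ an arbitrary matrix. Define the (autoregression joint covariance) block matrix Σ = fromBlocks Kl (ρ • (Kl * E)) (ρ • (Eᵀ * Kl)) (ρ² • (Eᵀ * Kl * E) + Kr) and the block matrix N = fromBlocks (Kl⁻¹ + ρ² • (E * Kr⁻¹ * Eᵀ)) (-(ρ • (E * Kr⁻¹))) (-(ρ • (Kr⁻¹ * Eᵀ))) Kr⁻¹. Then Σ * N = 1 and N * Σ = 1; in particular Σ is invertible with Σ⁻¹ = N. -/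
/-!
The joint covariance has the block LDU factorization
`Σ = [[1, 0], [ρEᵀ, 1]] * diag(Kl, Kr) * [[1, ρE], [0, 1]]`,
and `N` is the product of the inverses of the three factors in reverse order:
the unitriangular factors are inverted by negating their off-diagonal block.
-/

open Matrix

namespace Matrix

variable {m n R : Type*} [Fintype m] [Fintype n] [DecidableEq m] [DecidableEq n]

theorem fromBlocks_lower_mul_diag_mul_upper [Semiring R] (A : Matrix m m R) (B : Matrix m n R)
    (C : Matrix n m R) (D : Matrix n n R) :
    fromBlocks 1 0 C 1 * fromBlocks A 0 0 D * fromBlocks 1 B 0 1 =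
      fromBlocks A (A * B) (C * A) (C * A * B + D) := by
  simp [fromBlocks_multiply, Matrix.mul_assoc]

section Ring

variable [Ring R]

theorem fromBlocks_upper_mul_diag_mul_lower (A : Matrix m m R) (B : Matrix m n R)
    (C : Matrix n m R) (D : Matrix n n R) :
    fromBlocks 1 (-B) 0 1 * fromBlocks A 0 0 D * fromBlocks 1 0 (-C) 1 =
      fromBlocks (A + B * D * C) (-(B * D)) (-(D * C)) D := by
  simp [fromBlocks_multiply, Matrix.mul_assoc]

theorem fromBlocks_lower_unitriangular_mul_neg (C : Matrix n m R) :
    fromBlocks 1 0 C 1 * fromBlocks 1 0 (-C) 1 = (1 : Matrix (m ⊕ n) (m ⊕ n) R) := by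
  simp [fromBlocks_multiply]

theorem fromBlocks_upper_unitriangular_mul_neg (B : Matrix m n R) :
    fromBlocks 1 B 0 1 * fromBlocks 1 (-B) 0 1 = (1 : Matrix (m ⊕ n) (m ⊕ n) R) := by
  simp [fromBlocks_multiply]

end Ring

variable [CommRing R]

theorem fromBlocks_diag_mul_inv {A : Matrix m m R} {D : Matrix n n R}
    (hA : IsUnit A.det) (hD : IsUnit D.det) :
    fromBlocks A 0 0 D * fromBlocks A⁻¹ 0 0 D⁻¹ = 1 := by
  simp [fromBlocks_multiply, mul_nonsing_inv _ hA, mul_nonsing_inv _ hD]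

theorem fromBlocks_ldu_mul_inv {A : Matrix m m R} {D : Matrix n n R}
    (B : Matrix m n R) (C : Matrix n m R) (hA : IsUnit A.det) (hD : IsUnit D.det) :
    fromBlocks A (A * B) (C * A) (C * A * B + D) *
      fromBlocks (A⁻¹ + B * D⁻¹ * C) (-(B * D⁻¹)) (-(D⁻¹ * C)) D⁻¹ = 1 := by
  rw [← fromBlocks_lower_mul_diag_mul_upper, ← fromBlocks_upper_mul_diag_mul_lower]
  calc _ = fromBlocks 1 0 C 1 *
        (fromBlocks A 0 0 D * (fromBlocks 1 B 0 1 * fromBlocks 1 (-B) 0 1) *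
          fromBlocks A⁻¹ 0 0 D⁻¹) * fromBlocks 1 0 (-C) 1 := by
        simp only [Matrix.mul_assoc]
    _ = 1 := by
      rw [fromBlocks_upper_unitriangular_mul_neg, Matrix.mul_one,
        fromBlocks_diag_mul_inv hA hD, Matrix.mul_one, fromBlocks_lower_unitriangular_mul_neg]

end Matrix

theorem ar_joint_covariance_inverse {Nl Nh : Type*}
    [Fintype Nl] [Fintype Nh] [DecidableEq Nl] [DecidableEq Nh]
    (ρ : ℝ) (Kl : Matrix Nl Nl ℝ) (Kr : Matrix Nh Nh ℝ) (E : Matrix Nl Nh ℝ)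
    (hKl : IsUnit Kl.det) (hKr : IsUnit Kr.det) :
    let Cov : Matrix (Nl ⊕ Nh) (Nl ⊕ Nh) ℝ :=
      fromBlocks Kl (ρ • (Kl * E)) (ρ • (Eᵀ * Kl)) (ρ ^ 2 • (Eᵀ * Kl * E) + Kr)
    let N : Matrix (Nl ⊕ Nh) (Nl ⊕ Nh) ℝ :=
      fromBlocks (Kl⁻¹ + ρ ^ 2 • (E * Kr⁻¹ * Eᵀ)) (-(ρ • (E * Kr⁻¹)))
        (-(ρ • (Kr⁻¹ * Eᵀ))) Kr⁻¹
    Cov * N = 1 ∧ N * Cov = 1 ∧ IsUnit Cov.det ∧ Cov⁻¹ = N := by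
  intro Cov N
  have hCovN : Cov * N = 1 := by
    simpa only [Matrix.mul_smul, Matrix.smul_mul, smul_smul, ← pow_two] using
      fromBlocks_ldu_mul_inv (ρ • E) (ρ • Eᵀ) hKl hKr
  exact ⟨hCovN, mul_eq_one_comm.mp hCovN, isUnit_det_of_right_inverse hCovN,
    inv_eq_right_inv hCovN⟩
end

section
/- Let Nl and Nh be finite index types, ρ : ℝ, Kl : Matrix Nl Nl ℝ and Kr : Matrix Nh Nh ℝ invertible real matrices, and E : Matrix Nl Nh ℝ. Define Σ = fromBlocks Kl (ρ • (Kl * E)) (ρ • (Eᵀ * Kl)) (ρ² • (Eᵀ * Kl * E) + Kr). For any vectors Yl : Nl → ℝ and Yr : Nh → ℝ, let y : (Nl ⊕ Nh) → ℝ be the concatenated vector whose first block is Yl and whose second block is ρ • (Eᵀ.mulVec Yl) + Yr. Then the quadratic form decomposes as y ⬝ᵥ (Σ⁻¹.mulVec y) = Yl ⬝ᵥ (Kl⁻¹.mulVec Yl) + Yr ⬝ᵥ (Kr⁻¹.mulVec Yr). -/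
/-! The covariance factors as `L * blockDiag Kl Kr * Lᵀ` with `L = [[1, 0], [ρ Eᵀ, 1]]`
unit lower triangular, and the stacked observation vector is `L` applied to `(Yl, Yr)`.
A quadratic form in the inverse of `L D Lᵀ`, evaluated at `L x`, equals the one of `D⁻¹` at `x`,
and for the block-diagonal `D` it splits into the two blocks. -/

open Matrix

namespace Matrix

variable {m n α : Type*} [Fintype m] [Fintype n] [DecidableEq m] [DecidableEq n] [CommRing α]

theorem dotProduct_inv_mulVec_mul_mul_transpose {L : Matrix n n α} (hL : IsUnit L.det)
    (D : Matrix n n α) (x : n → α) :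
    (L *ᵥ x) ⬝ᵥ ((L * D * Lᵀ)⁻¹ *ᵥ (L *ᵥ x)) = x ⬝ᵥ (D⁻¹ *ᵥ x) := by
  rw [mul_inv_rev, mul_inv_rev, ← mulVec_mulVec, dotProduct_mulVec, ← transpose_nonsing_inv,
    vecMul_transpose]
  simp only [mulVec_mulVec, Matrix.mul_assoc, nonsing_inv_mul _ hL, Matrix.mul_one, one_mulVec]

theorem inv_fromBlocks_zero_zero {A : Matrix m m α} {D : Matrix n n α}
    (hAD : IsUnit A ↔ IsUnit D) :
    (fromBlocks A 0 0 D)⁻¹ = fromBlocks A⁻¹ 0 0 D⁻¹ := by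
  simpa using inv_fromBlocks_zero₁₂_of_isUnit_iff A 0 D hAD

theorem fromBlocks_one_zero_mul_diag_mul_transpose (A : Matrix m m α) (B : Matrix n n α)
    (C : Matrix n m α) :
    fromBlocks 1 0 C 1 * fromBlocks A 0 0 B * (fromBlocks 1 0 C 1)ᵀ =
      fromBlocks A (A * Cᵀ) (C * A) (C * A * Cᵀ + B) := by
  simp [fromBlocks_transpose, fromBlocks_multiply]

end Matrix

theorem ar_quadratic_form_decomposition {Nl Nh : Type*}
    [Fintype Nl] [Fintype Nh] [DecidableEq Nl] [DecidableEq Nh]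
    (ρ : ℝ) (Kl : Matrix Nl Nl ℝ) (Kr : Matrix Nh Nh ℝ) (E : Matrix Nl Nh ℝ)
    (hKl : IsUnit Kl.det) (hKr : IsUnit Kr.det)
    (Yl : Nl → ℝ) (Yr : Nh → ℝ) :
    let Cov : Matrix (Nl ⊕ Nh) (Nl ⊕ Nh) ℝ :=
      fromBlocks Kl (ρ • (Kl * E)) (ρ • (Eᵀ * Kl)) (ρ ^ 2 • (Eᵀ * Kl * E) + Kr)
    let y : (Nl ⊕ Nh) → ℝ := Sum.elim Yl (ρ • (Eᵀ.mulVec Yl) + Yr)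
    y ⬝ᵥ (Cov⁻¹.mulVec y) = Yl ⬝ᵥ (Kl⁻¹.mulVec Yl) + Yr ⬝ᵥ (Kr⁻¹.mulVec Yr) := by
  intro Cov y
  set L : Matrix (Nl ⊕ Nh) (Nl ⊕ Nh) ℝ := fromBlocks 1 0 (ρ • Eᵀ) 1
  have hCov : Cov = L * fromBlocks Kl 0 0 Kr * Lᵀ := by
    rw [fromBlocks_one_zero_mul_diag_mul_transpose]
    simp [Cov, Matrix.mul_smul, Matrix.smul_mul, smul_smul, sq, Matrix.mul_assoc]
  have hy : y = L *ᵥ Sum.elim Yl Yr := by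
    simp [y, L, fromBlocks_mulVec, smul_mulVec]
  have hL : IsUnit L.det := by simp [L]
  have hKlKr : IsUnit Kl ↔ IsUnit Kr :=
    iff_of_true ((isUnit_iff_isUnit_det _).2 hKl) ((isUnit_iff_isUnit_det _).2 hKr)
  rw [hCov, hy, dotProduct_inv_mulVec_mul_mul_transpose hL,
    inv_fromBlocks_zero_zero hKlKr, fromBlocks_mulVec]
  simp [sumElim_dotProduct_sumElim]
end

section
/- Let Nl and Nh be finite index types, ρ : ℝ, Kl : Matrix Nl Nl ℝ, Kr : Matrix Nh Nh ℝ, and E : Matrix Nl Nh ℝ arbitrary real matrices. Define Σ = fromBlocks Kl (ρ • (Kl * E)) (ρ • (Eᵀ * Kl)) (ρ² • (Eᵀ * Kl * E) + Kr). Then det Σ = det Kl * det Kr. -/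
open Matrix

theorem fromBlocks_eq_lowerTriangular_mul_upperTriangular
    {m n R : Type*} [Fintype m] [Fintype n] [DecidableEq m] [DecidableEq n] [Semiring R]
    (A : Matrix m m R) (D : Matrix n n R) (F : Matrix m n R) (G : Matrix n m R) :
    fromBlocks A (A * F) (G * A) (G * A * F + D) =
      fromBlocks 1 0 G 1 * fromBlocks A (A * F) 0 D := by
  simp [fromBlocks_multiply, Matrix.mul_assoc]

theorem det_fromBlocks_mul_mul {m n R : Type*} [Fintype m] [Fintype n] [DecidableEq m]
    [DecidableEq n] [CommRing R]
    (A : Matrix m m R) (D : Matrix n n R) (F : Matrix m n R) (G : Matrix n m R) :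
    (fromBlocks A (A * F) (G * A) (G * A * F + D)).det = A.det * D.det := by
  rw [fromBlocks_eq_lowerTriangular_mul_upperTriangular, det_mul, det_fromBlocks_zero₁₂,
    det_fromBlocks_zero₂₁, det_one, det_one, one_mul, one_mul]

theorem ar_joint_covariance_det {Nl Nh : Type*}
    [Fintype Nl] [Fintype Nh] [DecidableEq Nl] [DecidableEq Nh]
    (ρ : ℝ) (Kl : Matrix Nl Nl ℝ) (Kr : Matrix Nh Nh ℝ) (E : Matrix Nl Nh ℝ) :
    (fromBlocks Kl (ρ • (Kl * E)) (ρ • (Eᵀ * Kl)) (ρ ^ 2 • (Eᵀ * Kl * E) + Kr)).det =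
      Kl.det * Kr.det := by
  have hblocks : fromBlocks Kl (ρ • (Kl * E)) (ρ • (Eᵀ * Kl)) (ρ ^ 2 • (Eᵀ * Kl * E) + Kr) =
      fromBlocks Kl (Kl * (ρ • E)) ((ρ • Eᵀ) * Kl) ((ρ • Eᵀ) * Kl * (ρ • E) + Kr) := by
    simp only [Matrix.smul_mul, Matrix.mul_smul, smul_smul, sq]
  rw [hblocks, det_fromBlocks_mul_mul]
end

section
/- Let Nl and Nh be finite index types, ρ : ℝ, Kl : Matrix Nl Nl ℝ and Kr : Matrix Nh Nh ℝ invertible real matrices, and E : Matrix Nl Nh ℝ. Define Σ = fromBlocks Kl (ρ • (Kl * E)) (ρ • (Eᵀ * Kl)) (ρ² • (Eᵀ * Kl * E) + Kr). Let kl⋆ : Matrix Unit Nl ℝ and kr⋆ : Matrix Unit Nh ℝ be row vectors, and let C : Matrix Unit (Nl ⊕ Nh) ℝ be the block row whose first block is ρ • kl⋆ and whose second block is ρ² • (kl⋆ * E) + kr⋆. For vectors Yl : Nl → ℝ, Yr : Nh → ℝ let y : (Nl ⊕ Nh) → ℝ have first block Yl and second block ρ • (Eᵀ.mulVec Yl)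 + Yr. Then C.mulVec (Σ⁻¹.mulVec y) = ρ • ((kl⋆ * Kl⁻¹).mulVec Yl) + (kr⋆ * Kr⁻¹).mulVec Yr (as functions Unit → ℝ). -/
/-!
Write `L = [[1, 0], [ρ Eᵀ, 1]]`, `U = [[Kl, ρ Kl E], [0, Kr]]` and
`D = [[ρ Kl⁻¹, 0], [0, Kr⁻¹]]`. The AR covariance factors as `Σ = L U`, the observation vector
is `y = L (Yl, Yr)`, and the cross-covariance row is `C = (kl⋆, kr⋆) D U`. Hence
`C Σ⁻¹ y = (kl⋆, kr⋆) D U U⁻¹ L⁻¹ L (Yl, Yr) = (kl⋆, kr⋆) D (Yl, Yr)`, where both triangular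
factors are invertible because `L` is unipotent and `det U = det Kl * det Kr`.
-/

open Matrix

section

variable {R : Type*} [CommRing R] {m n : Type*} [Fintype m] [Fintype n]

theorem mul_mul_inv_mul_cancel_of_isUnit_det {k : Type*} [DecidableEq n]
    (A : Matrix k n R) {L U : Matrix n n R} (hL : IsUnit L.det) (hU : IsUnit U.det) :
    A * U * (L * U)⁻¹ * L = A := by
  calc A * U * (L * U)⁻¹ * L = A * (U * U⁻¹) * (L⁻¹ * L) := by
        simp only [Matrix.mul_inv_rev, Matrix.mul_assoc]
    _ = A := by rw [mul_nonsing_inv U hU, nonsing_inv_mul L hL, Matrix.mul_one, Matrix.mul_one]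

variable [DecidableEq m] [DecidableEq n]

theorem isUnit_det_fromBlocks_one_zero_one (B : Matrix n m R) :
    IsUnit (fromBlocks (1 : Matrix m m R) 0 B 1).det := by
  simp

theorem isUnit_det_fromBlocks_zero₂₁ {A : Matrix m m R} (B : Matrix m n R) {D : Matrix n n R}
    (hA : IsUnit A.det) (hD : IsUnit D.det) : IsUnit (fromBlocks A B 0 D).det := by
  rw [det_fromBlocks_zero₂₁]
  exact hA.mul hD

variable (ρ : R) (Kl : Matrix m m R) (Kr : Matrix n n R) (E : Matrix m n R)

theorem arCovariance_eq_mul :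
    fromBlocks Kl (ρ • (Kl * E)) (ρ • (Eᵀ * Kl)) (ρ ^ 2 • (Eᵀ * Kl * E) + Kr) =
      fromBlocks 1 0 (ρ • Eᵀ) 1 * fromBlocks Kl (ρ • (Kl * E)) 0 Kr := by
  rw [fromBlocks_multiply]
  simp [Matrix.smul_mul, Matrix.mul_smul, smul_smul, sq, Matrix.mul_assoc]

theorem arObservation_eq_mulVec (Yl : m → R) (Yr : n → R) :
    Sum.elim Yl (ρ • (Eᵀ *ᵥ Yl) + Yr) =
      fromBlocks 1 0 (ρ • Eᵀ) 1 *ᵥ Sum.elim Yl Yr := by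
  simp [fromBlocks_mulVec, Matrix.smul_mulVec]

theorem arCrossCovariance_eq_mul {k : Type*} (hKl : IsUnit Kl.det) (hKr : IsUnit Kr.det)
    (kls : Matrix k m R) (krs : Matrix k n R) :
    fromCols (ρ • kls) (ρ ^ 2 • (kls * E) + krs) =
      fromCols kls krs * fromBlocks (ρ • Kl⁻¹) 0 0 Kr⁻¹ *
        fromBlocks Kl (ρ • (Kl * E)) 0 Kr := by
  rw [Matrix.mul_assoc, fromBlocks_multiply, fromCols_mul_fromBlocks]
  simp [Matrix.smul_mul, Matrix.mul_smul, ← Matrix.mul_assoc, nonsing_inv_mul _ hKl,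
    nonsing_inv_mul _ hKr, smul_smul, sq]

theorem arWeights_mulVec_sumElim {k : Type*} (kls : Matrix k m R) (krs : Matrix k n R)
    (Yl : m → R) (Yr : n → R) :
    (fromCols kls krs * fromBlocks (ρ • Kl⁻¹) 0 0 Kr⁻¹) *ᵥ Sum.elim Yl Yr =
      ρ • ((kls * Kl⁻¹) *ᵥ Yl) + (krs * Kr⁻¹) *ᵥ Yr := by
  rw [fromCols_mul_fromBlocks, fromCols_mulVec_sumElim]
  simp [Matrix.mul_smul, Matrix.smul_mulVec]

end

theorem ar_posterior_mean {Nl Nh : Type*}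
    [Fintype Nl] [Fintype Nh] [DecidableEq Nl] [DecidableEq Nh]
    (ρ : ℝ) (Kl : Matrix Nl Nl ℝ) (Kr : Matrix Nh Nh ℝ) (E : Matrix Nl Nh ℝ)
    (hKl : IsUnit Kl.det) (hKr : IsUnit Kr.det)
    (kls : Matrix Unit Nl ℝ) (krs : Matrix Unit Nh ℝ)
    (Yl : Nl → ℝ) (Yr : Nh → ℝ) :
    let Cov : Matrix (Nl ⊕ Nh) (Nl ⊕ Nh) ℝ :=
      fromBlocks Kl (ρ • (Kl * E)) (ρ • (Eᵀ * Kl)) (ρ ^ 2 • (Eᵀ * Kl * E) + Kr)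
    let C : Matrix Unit (Nl ⊕ Nh) ℝ :=
      fromCols (ρ • kls) (ρ ^ 2 • (kls * E) + krs)
    let y : (Nl ⊕ Nh) → ℝ := Sum.elim Yl (ρ • (Eᵀ.mulVec Yl) + Yr)
    C.mulVec (Cov⁻¹.mulVec y) =
      ρ • ((kls * Kl⁻¹).mulVec Yl) + (krs * Kr⁻¹).mulVec Yr := by
  intro Cov C y
  rw [show Cov = _ from arCovariance_eq_mul ρ Kl Kr E,
    show C = _ from arCrossCovariance_eq_mul ρ Kl Kr E hKl hKr kls krs,
    show y = _ from arObservation_eq_mulVec ρ E Yl Yr, mulVec_mulVec, mulVec_mulVec,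
    mul_mul_inv_mul_cancel_of_isUnit_det _ (isUnit_det_fromBlocks_one_zero_one _)
      (isUnit_det_fromBlocks_zero₂₁ _ hKl hKr),
    arWeights_mulVec_sumElim]
end

section
/- Let Nl and Nh be finite index types, ρ : ℝ, Kl : Matrix Nl Nl ℝ and Kr : Matrix Nh Nh ℝ invertible real matrices, E : Matrix Nl Nh ℝ, and row vectors kl⋆ : Matrix Unit Nl ℝ, kr⋆ : Matrix Unit Nh ℝ, and scalars kll, krr : ℝ. Define Σ = fromBlocks Kl (ρ • (Kl * E)) (ρ • (Eᵀ * Kl)) (ρ² • (Eᵀ * Kl * E) + Kr) and the block row C : Matrix Unit (Nl ⊕ Nh) ℝ with first block ρ • kl⋆ and second block ρ² • (kl⋆ * E) + kr⋆. Then the posterior variance matrix satisfies (ρ² * kll + krr) • (1 : Matrix Unit Unit ℝ) - C * Σ⁻¹ * Cᵀ = ρ² • (kll • 1 - kl⋆ * Kl⁻¹ * kl⋆ᵀ) + (krr • 1 - kr⋆ * Kr⁻¹ * kr⋆ᵀ). -/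
/-! The covariance factors as `Σ = L (Kl ⊕ Kr) Lᵀ` with the unitriangular
`L = [[1, 0], [ρ Eᵀ, 1]]`, and `C = [ρ kl⋆, kr⋆] Lᵀ`. The quadratic form `C Σ⁻¹ Cᵀ` is invariant
under this congruence, so it equals the block-diagonal form `ρ² kl⋆ Kl⁻¹ kl⋆ᵀ + kr⋆ Kr⁻¹ kr⋆ᵀ`. -/

open Matrix

namespace Matrix

variable {m n l α : Type*} [CommRing α]

theorem fromBlocks_one_zero_mul_fromBlocks_zero_zero_mul_transpose
    [Fintype m] [Fintype n] [DecidableEq m] [DecidableEq n]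
    (L : Matrix n m α) (A : Matrix m m α) (D : Matrix n n α) :
    fromBlocks 1 0 L 1 * fromBlocks A 0 0 D * (fromBlocks 1 0 L 1)ᵀ =
      fromBlocks A (A * Lᵀ) (L * A) (L * A * Lᵀ + D) := by
  simp [fromBlocks_transpose, fromBlocks_multiply]

theorem mul_transpose_mul_inv_congr_mul_transpose [Fintype n] [DecidableEq n]
    (c : Matrix m n α) (P D : Matrix n n α) (hP : IsUnit P.det) :
    c * Pᵀ * (P * D * Pᵀ)⁻¹ * (c * Pᵀ)ᵀ = c * D⁻¹ * cᵀ := by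
  have hPt : IsUnit Pᵀ.det := by rwa [det_transpose]
  simp only [mul_inv_rev, transpose_mul, transpose_transpose, Matrix.mul_assoc,
    mul_nonsing_inv_cancel_left _ _ hPt, nonsing_inv_mul_cancel_left _ _ hP]

theorem fromCols_mul_inv_fromBlocks_zero_zero_mul_transpose
    [Fintype m] [Fintype n] [DecidableEq m] [DecidableEq n]
    (a : Matrix l m α) (b : Matrix l n α) (A : Matrix m m α) (D : Matrix n n α)
    (hA : IsUnit A.det) (hD : IsUnit D.det) :
    fromCols a b * (fromBlocks A 0 0 D)⁻¹ * (fromCols a b)ᵀ = a * A⁻¹ * aᵀ + b * D⁻¹ * bᵀ := by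
  have hAD : IsUnit A ↔ IsUnit D := by
    simp only [isUnit_iff_isUnit_det, hA, hD]
  rw [inv_fromBlocks_zero₁₂_of_isUnit_iff A 0 D hAD]
  simp [fromCols_mul_fromBlocks, transpose_fromCols, fromCols_mul_fromRows]

end Matrix

theorem ar_posterior_variance {Nl Nh : Type*}
    [Fintype Nl] [Fintype Nh] [DecidableEq Nl] [DecidableEq Nh]
    (ρ : ℝ) (Kl : Matrix Nl Nl ℝ) (Kr : Matrix Nh Nh ℝ) (E : Matrix Nl Nh ℝ)
    (hKl : IsUnit Kl.det) (hKr : IsUnit Kr.det)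
    (kls : Matrix Unit Nl ℝ) (krs : Matrix Unit Nh ℝ) (kll krr : ℝ) :
    let Cov : Matrix (Nl ⊕ Nh) (Nl ⊕ Nh) ℝ :=
      fromBlocks Kl (ρ • (Kl * E)) (ρ • (Eᵀ * Kl)) (ρ ^ 2 • (Eᵀ * Kl * E) + Kr)
    let C : Matrix Unit (Nl ⊕ Nh) ℝ :=
      fromCols (ρ • kls) (ρ ^ 2 • (kls * E) + krs)
    (ρ ^ 2 * kll + krr) • (1 : Matrix Unit Unit ℝ) - C * Cov⁻¹ * Cᵀ =
      ρ ^ 2 • (kll • (1 : Matrix Unit Unit ℝ) - kls * Kl⁻¹ * klsᵀ) +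
        (krr • (1 : Matrix Unit Unit ℝ) - krs * Kr⁻¹ * krsᵀ) := by
  intro Cov C
  set L : Matrix (Nl ⊕ Nh) (Nl ⊕ Nh) ℝ := fromBlocks 1 0 (ρ • Eᵀ) 1
  have hL : IsUnit L.det := by simp [L]
  have hCov : Cov = L * fromBlocks Kl 0 0 Kr * Lᵀ := by
    rw [fromBlocks_one_zero_mul_fromBlocks_zero_zero_mul_transpose]
    simp [Cov, Matrix.mul_assoc, smul_smul, pow_two]
  have hC : C = fromCols (ρ • kls) krs * Lᵀ := by
    simp [C, L, fromBlocks_transpose, fromCols_mul_fromBlocks, smul_smul, pow_two]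
  rw [hCov, hC, mul_transpose_mul_inv_congr_mul_transpose _ _ _ hL,
    fromCols_mul_inv_fromBlocks_zero_zero_mul_transpose _ _ _ _ hKl hKr]
  simp only [transpose_smul, Matrix.smul_mul, Matrix.mul_smul, smul_smul]
  module
end

section
/- Let Nl, Nh, dl, dh be finite index types and let Kl : Matrix Nl Nl ℝ, Sl : Matrix dl dl ℝ, Kr : Matrix Nh Nh ℝ, Sr : Matrix dh dh ℝ, E : Matrix Nl Nh ℝ, and W : Matrix dh dl ℝ be arbitrary real matrices. Define the GAR joint covariance block matrix Σ = fromBlocks (Kl ⊗ Sl) ((Kl * E) ⊗ (Sl * Wᵀ)) ((Eᵀ * Kl) ⊗ (W * Sl)) ((Eᵀ * Kl * E) ⊗ (W * Sl * Wᵀ) + Kr ⊗ Sr). Then Σ admits the factorization Σ = L * D * Lᵀ, where L = fromBlocks 1 0 (Eᵀ ⊗ W) 1 and D = fromBlocks (Kl ⊗ Sl) 0 0 (Kr ⊗ Sr). -/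
/-! `fromBlocks 1 0 C 1` is the matrix of `(x, r) ↦ (x, C x + r)`, so conjugating the
block-diagonal covariance of uncorrelated `(x, r)` by it gives the covariance of `(x, C x + r)`.
With `C = Eᵀ ⊗ W` the mixed-product property `(A ⊗ B) * (A' ⊗ B') = (A * A') ⊗ (B * B')`
turns each block into the stated Kronecker product. -/

open Matrix Kronecker

namespace Matrix

variable {m n R : Type*} [Fintype m] [Fintype n] [DecidableEq m] [DecidableEq n] [Semiring R]

theorem fromBlocks_lowerUnitriangular_mul_blockDiagonal_mul_transpose
    (A : Matrix m m R) (C : Matrix n m R) (D : Matrix n n R) :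
    fromBlocks 1 0 C 1 * fromBlocks A 0 0 D * (fromBlocks 1 0 C 1)ᵀ =
      fromBlocks A (A * Cᵀ) (C * A) (C * A * Cᵀ + D) := by
  simp [fromBlocks_transpose, fromBlocks_multiply]

end Matrix

theorem gar_joint_covariance_ldl {Nl Nh dl dh : Type*}
    [Fintype Nl] [Fintype Nh] [Fintype dl] [Fintype dh]
    [DecidableEq Nl] [DecidableEq Nh] [DecidableEq dl] [DecidableEq dh]
    (Kl : Matrix Nl Nl ℝ) (Sl : Matrix dl dl ℝ)
    (Kr : Matrix Nh Nh ℝ) (Sr : Matrix dh dh ℝ)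
    (E : Matrix Nl Nh ℝ) (W : Matrix dh dl ℝ) :
    fromBlocks (Kl ⊗ₖ Sl) ((Kl * E) ⊗ₖ (Sl * Wᵀ)) ((Eᵀ * Kl) ⊗ₖ (W * Sl))
        ((Eᵀ * Kl * E) ⊗ₖ (W * Sl * Wᵀ) + Kr ⊗ₖ Sr) =
      fromBlocks 1 0 (Eᵀ ⊗ₖ W) 1 *
        fromBlocks (Kl ⊗ₖ Sl) 0 0 (Kr ⊗ₖ Sr) *
        (fromBlocks 1 0 (Eᵀ ⊗ₖ W) 1)ᵀ := by
  rw [fromBlocks_lowerUnitriangular_mul_blockDiagonal_mul_transpose, ← kroneckerMap_transpose,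
    transpose_transpose, ← mul_kronecker_mul, ← mul_kronecker_mul, ← mul_kronecker_mul]
end

section
/- Let Nl, Nh, dl, dh be finite index types, let Kl : Matrix Nl Nl ℝ, Sl : Matrix dl dl ℝ, Kr : Matrix Nh Nh ℝ, Sr : Matrix dh dh ℝ be invertible real matrices (their determinants are units), and let E : Matrix Nl Nh ℝ, W : Matrix dh dl ℝ be arbitrary. Define Σ = fromBlocks (Kl ⊗ Sl) ((Kl * E) ⊗ (Sl * Wᵀ)) ((Eᵀ * Kl) ⊗ (W * Sl)) ((Eᵀ * Kl * E) ⊗ (W * Sl * Wᵀ) + Kr ⊗ Sr) and N = fromBlocks (Kl⁻¹ ⊗ Sl⁻¹ + (E * Kr⁻¹ * Eᵀ) ⊗ (Wᵀ * Sr⁻¹ * W)) (-((E * Kr⁻¹) ⊗ (Wᵀ * Sr⁻¹))) (-((Kr⁻¹ * Eᵀ) ⊗ (Sr⁻¹ * W))) (Kr⁻¹ ⊗ Sr⁻¹). Then Σ * N = 1 and N * Σ = 1; in particular Σ is invertible with Σ⁻¹ = N. -/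
/-!
With `A = Kl ⊗ₖ Sl`, `D = Kr ⊗ₖ Sr`, `B = Eᵀ ⊗ₖ W` and `C = Bᵀ = E ⊗ₖ Wᵀ`, the mixed-product
property turns the covariance into `fromBlocks A (A * C) (B * A) (B * A * C + D)`, which is the
block LDU product `[[1, 0], [B, 1]] * diag(A, D) * [[1, C], [0, 1]]`. Inverting the three
factors gives `fromBlocks (A⁻¹ + C * D⁻¹ * B) (-(C * D⁻¹)) (-(D⁻¹ * B)) D⁻¹`, which is `N`
because the inverse of a Kronecker product is the Kronecker product of the inverses.
-/

open Matrix Kronecker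

namespace Matrix

section BlockLDU

variable {m n α : Type*} [Fintype m] [Fintype n] [DecidableEq m] [DecidableEq n] [Ring α]
  {A A' : Matrix m m α} {D D' : Matrix n n α} (B : Matrix n m α) (C : Matrix m n α)

theorem fromBlocks_ldu_mul_eq_one (hA : A * A' = 1) (hD : D * D' = 1) :
    fromBlocks A (A * C) (B * A) (B * A * C + D) *
      fromBlocks (A' + C * D' * B) (-(C * D')) (-(D' * B)) D' = 1 := by
  have hDB : D * (D' * B) = B := by rw [← Matrix.mul_assoc, hD, Matrix.one_mul]
  rw [fromBlocks_multiply, ← fromBlocks_one]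
  congr 1 <;>
    simp only [Matrix.mul_add, Matrix.add_mul, Matrix.mul_neg, Matrix.mul_assoc, hA, hD, hDB,
      Matrix.mul_one] <;> abel

theorem fromBlocks_ldu_inv_mul_eq_one (hA : A' * A = 1) (hD : D' * D = 1) :
    fromBlocks (A' + C * D' * B) (-(C * D')) (-(D' * B)) D' *
      fromBlocks A (A * C) (B * A) (B * A * C + D) = 1 := by
  have hAC : A' * (A * C) = C := by rw [← Matrix.mul_assoc, hA, Matrix.one_mul]
  rw [fromBlocks_multiply, ← fromBlocks_one]
  congr 1 <;>
    simp only [Matrix.mul_add, Matrix.add_mul, Matrix.neg_mul, Matrix.mul_assoc, hA, hD, hAC,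
      Matrix.mul_one] <;> abel

end BlockLDU

theorem kronecker_mul_kronecker_eq_one {m n α : Type*} [Fintype m] [Fintype n] [DecidableEq m]
    [DecidableEq n] [CommSemiring α] {A A' : Matrix m m α} {B B' : Matrix n n α}
    (hA : A * A' = 1) (hB : B * B' = 1) : A ⊗ₖ B * A' ⊗ₖ B' = 1 := by
  rw [← mul_kronecker_mul, hA, hB, one_kronecker_one]

end Matrix

theorem gar_joint_covariance_inverse {Nl Nh dl dh : Type*}
    [Fintype Nl] [Fintype Nh] [Fintype dl] [Fintype dh]
    [DecidableEq Nl] [DecidableEq Nh] [DecidableEq dl] [DecidableEq dh]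
    (Kl : Matrix Nl Nl ℝ) (Sl : Matrix dl dl ℝ)
    (Kr : Matrix Nh Nh ℝ) (Sr : Matrix dh dh ℝ)
    (E : Matrix Nl Nh ℝ) (W : Matrix dh dl ℝ)
    (hKl : IsUnit Kl.det) (hSl : IsUnit Sl.det)
    (hKr : IsUnit Kr.det) (hSr : IsUnit Sr.det) :
    let Cov : Matrix ((Nl × dl) ⊕ (Nh × dh)) ((Nl × dl) ⊕ (Nh × dh)) ℝ :=
      fromBlocks (Kl ⊗ₖ Sl) ((Kl * E) ⊗ₖ (Sl * Wᵀ)) ((Eᵀ * Kl) ⊗ₖ (W * Sl))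
        ((Eᵀ * Kl * E) ⊗ₖ (W * Sl * Wᵀ) + Kr ⊗ₖ Sr)
    let N : Matrix ((Nl × dl) ⊕ (Nh × dh)) ((Nl × dl) ⊕ (Nh × dh)) ℝ :=
      fromBlocks (Kl⁻¹ ⊗ₖ Sl⁻¹ + (E * Kr⁻¹ * Eᵀ) ⊗ₖ (Wᵀ * Sr⁻¹ * W))
        (-((E * Kr⁻¹) ⊗ₖ (Wᵀ * Sr⁻¹))) (-((Kr⁻¹ * Eᵀ) ⊗ₖ (Sr⁻¹ * W))) (Kr⁻¹ ⊗ₖ Sr⁻¹)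
    Cov * N = 1 ∧ N * Cov = 1 ∧ IsUnit Cov.det ∧ Cov⁻¹ = N := by
  intro Cov N
  have hCovN : Cov * N = 1 := by
    have h := fromBlocks_ldu_mul_eq_one (Eᵀ ⊗ₖ W) (E ⊗ₖ Wᵀ)
      (kronecker_mul_kronecker_eq_one (mul_nonsing_inv Kl hKl) (mul_nonsing_inv Sl hSl))
      (kronecker_mul_kronecker_eq_one (mul_nonsing_inv Kr hKr) (mul_nonsing_inv Sr hSr))
    simp only [← mul_kronecker_mul] at h
    exact h
  have hNCov : N * Cov = 1 := by
    have h := fromBlocks_ldu_inv_mul_eq_one (Eᵀ ⊗ₖ W) (E ⊗ₖ Wᵀ)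
      (kronecker_mul_kronecker_eq_one (nonsing_inv_mul Kl hKl) (nonsing_inv_mul Sl hSl))
      (kronecker_mul_kronecker_eq_one (nonsing_inv_mul Kr hKr) (nonsing_inv_mul Sr hSr))
    simp only [← mul_kronecker_mul] at h
    exact h
  exact ⟨hCovN, hNCov, isUnit_det_of_left_inverse hNCov, inv_eq_right_inv hCovN⟩
end

section
/- Let Nl, Nh, dl, dh be finite index types and Kl : Matrix Nl Nl ℝ, Sl : Matrix dl dl ℝ, Kr : Matrix Nh Nh ℝ, Sr : Matrix dh dh ℝ, E : Matrix Nl Nh ℝ, W : Matrix dh dl ℝ arbitrary real matrices. Define Σ = fromBlocks (Kl ⊗ Sl) ((Kl * E) ⊗ (Sl * Wᵀ)) ((Eᵀ * Kl) ⊗ (W * Sl)) ((Eᵀ * Kl * E) ⊗ (W * Sl * Wᵀ) + Kr ⊗ Sr). Then det Σ = det (Kl ⊗ Sl) * det (Kr ⊗ Sr). -/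
open Matrix Kronecker

/-! Writing `M := E ⊗ₖ Wᵀ`, the mixed-product property turns `Σ` into
`[[A, A M], [Mᵀ A, Mᵀ A M + D]]` with `A = Kl ⊗ₖ Sl` and `D = Kr ⊗ₖ Sr`. This matrix is the
product of the unipotent block matrix `[[1, 0], [Mᵀ, 1]]` with the block upper triangular
`[[A, A M], [0, D]]`, so its determinant is `det A * det D`. -/

namespace Matrix

variable {R m n : Type*} [CommRing R] [Fintype m] [Fintype n] [DecidableEq m] [DecidableEq n]

theorem fromBlocks_mul_mul_add_eq (A : Matrix m m R) (B : Matrix m n R) (C : Matrix n m R)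
    (D : Matrix n n R) :
    fromBlocks A (A * B) (C * A) (C * A * B + D) =
      fromBlocks 1 0 C 1 * fromBlocks A (A * B) 0 D := by
  rw [fromBlocks_multiply]
  simp [Matrix.mul_assoc]

theorem det_fromBlocks_mul_mul_add (A : Matrix m m R) (B : Matrix m n R) (C : Matrix n m R)
    (D : Matrix n n R) :
    (fromBlocks A (A * B) (C * A) (C * A * B + D)).det = A.det * D.det := by
  rw [fromBlocks_mul_mul_add_eq, det_mul, det_fromBlocks_zero₁₂, det_fromBlocks_zero₂₁, det_one,
    det_one, one_mul, one_mul]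

end Matrix

theorem gar_joint_covariance_det {Nl Nh dl dh : Type*}
    [Fintype Nl] [Fintype Nh] [Fintype dl] [Fintype dh]
    [DecidableEq Nl] [DecidableEq Nh] [DecidableEq dl] [DecidableEq dh]
    (Kl : Matrix Nl Nl ℝ) (Sl : Matrix dl dl ℝ)
    (Kr : Matrix Nh Nh ℝ) (Sr : Matrix dh dh ℝ)
    (E : Matrix Nl Nh ℝ) (W : Matrix dh dl ℝ) :
    (fromBlocks (Kl ⊗ₖ Sl) ((Kl * E) ⊗ₖ (Sl * Wᵀ)) ((Eᵀ * Kl) ⊗ₖ (W * Sl))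
        ((Eᵀ * Kl * E) ⊗ₖ (W * Sl * Wᵀ) + Kr ⊗ₖ Sr)).det =
      (Kl ⊗ₖ Sl).det * (Kr ⊗ₖ Sr).det := by
  have hC : (Eᵀ * Kl) ⊗ₖ (W * Sl) = (E ⊗ₖ Wᵀ)ᵀ * (Kl ⊗ₖ Sl) := by
    rw [← kroneckerMap_transpose, transpose_transpose, mul_kronecker_mul]
  rw [mul_kronecker_mul Kl E, mul_kronecker_mul (Eᵀ * Kl), hC, det_fromBlocks_mul_mul_add]
end

section
/- Let Nl, Nh, dl, dh be finite index types, Kl : Matrix Nl Nl ℝ, Sl : Matrix dl dl ℝ, Kr : Matrix Nh Nh ℝ, Sr : Matrix dh dh ℝ invertible real matrices, E : Matrix Nl Nh ℝ, W : Matrix dh dl ℝ arbitrary, and Σ = fromBlocks (Kl ⊗ Sl) ((Kl * E) ⊗ (Sl * Wᵀ)) ((Eᵀ * Kl) ⊗ (W * Sl)) ((Eᵀ * Kl * E) ⊗ (W * Sl * Wᵀ) + Kr ⊗ Sr). Let kl⋆ : Matrix Unit Nl ℝ and kr⋆ : Matrix Unit Nh ℝ be row vectors and let C : Matrix (Unit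 × dh) ((Nl × dl) ⊕ (Nh × dh)) ℝ be the block row with first block kl⋆ ⊗ (W * Sl) and second block (kl⋆ * E) ⊗ (W * Sl * Wᵀ) + kr⋆ ⊗ Sr. For vectors yl : (Nl × dl) → ℝ, yr : (Nh × dh) → ℝ, let y have first block yl and second block (Eᵀ ⊗ W).mulVec yl + yr. Then C.mulVec (Σ⁻¹.mulVec y) = ((kl⋆ * Kl⁻¹) ⊗ W).mulVec yl + ((kr⋆ * Kr⁻¹) ⊗ (1 : Matrix dh dh ℝ)).mulVec yr. -/
/-!
The covariance factors as `Σ = L D U` with `L = [[1, 0], [N, 1]]`, `D = diag (Kl ⊗ Sl, Kr ⊗ Sr)`,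
`U = [[1, M], [0, 1]]`, where `N = Eᵀ ⊗ W` and `M = E ⊗ Wᵀ`. The test cross-covariance is
`C = [ρ σ] D U` with `ρ = kl⋆ Kl⁻¹ ⊗ W`, `σ = kr⋆ Kr⁻¹ ⊗ 1`, and the data are `y = L (yl, yr)`.
Hence `C Σ⁻¹ y = [ρ σ] (yl, yr)`, in which `Sl` and `Sr` have cancelled.
-/

open Matrix Kronecker

namespace Matrix

variable {R : Type*} [CommRing R] {m n : Type*} [Fintype m] [Fintype n] [DecidableEq m]
  [DecidableEq n]

theorem fromBlocks_eq_ldu (A : Matrix m m R) (B : Matrix n n R) (M : Matrix m n R)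
    (N : Matrix n m R) :
    fromBlocks A (A * M) (N * A) (N * A * M + B) =
      fromBlocks 1 0 N 1 * fromBlocks A 0 0 B * fromBlocks 1 M 0 1 := by
  simp [fromBlocks_multiply]

theorem fromCols_mulVec_inv_fromBlocks_mulVec {A : Matrix m m R} {B : Matrix n n R}
    (hA : IsUnit A.det) (hB : IsUnit B.det) {l : Type*} (ρ : Matrix l m R) (σ : Matrix l n R)
    (M : Matrix m n R) (N : Matrix n m R) (u : m → R) (v : n → R) :
    fromCols (ρ * A) (ρ * A * M + σ * B) *ᵥ
        ((fromBlocks A (A * M) (N * A) (N * A * M + B))⁻¹ *ᵥ Sum.elim u (N *ᵥ u + v)) =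
      ρ *ᵥ u + σ *ᵥ v := by
  have hL : fromBlocks 1 0 (-N) 1 * fromBlocks 1 0 N 1 = (1 : Matrix (m ⊕ n) (m ⊕ n) R) := by
    simp [fromBlocks_multiply]
  have hCov : IsUnit (fromBlocks A (A * M) (N * A) (N * A * M + B)).det := by
    rw [fromBlocks_eq_ldu, det_mul, det_mul, det_fromBlocks_zero₁₂, det_fromBlocks_zero₂₁,
      det_fromBlocks_zero₂₁]
    simpa using hA.mul hB
  have hC : fromCols (ρ * A) (ρ * A * M + σ * B) =
      fromCols ρ σ * (fromBlocks 1 0 (-N) 1 : Matrix (m ⊕ n) (m ⊕ n) R) *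
        fromBlocks A (A * M) (N * A) (N * A * M + B) := by
    simp [fromCols_mul_fromBlocks, Matrix.mul_add, Matrix.add_mul, Matrix.mul_assoc]
  have hy : Sum.elim u (N *ᵥ u + v) = fromBlocks 1 0 N 1 *ᵥ Sum.elim u v := by
    simp [fromBlocks_mulVec]
  rw [hC, mulVec_mulVec, mul_nonsing_inv_cancel_right _ _ hCov, hy, mulVec_mulVec,
    Matrix.mul_assoc, hL, Matrix.mul_one, fromCols_mulVec_sumElim]

theorem isUnit_det_kronecker {p : Type*} [Fintype p] [DecidableEq p] {A : Matrix m m R}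
    {B : Matrix p p R} (hA : IsUnit A.det) (hB : IsUnit B.det) : IsUnit (A ⊗ₖ B).det := by
  rw [det_kronecker]
  exact (hA.pow _).mul (hB.pow _)

theorem mul_inv_kronecker_mul_kronecker {l p q r : Type*} [Fintype q] {K : Matrix m m R}
    (hK : IsUnit K.det) (X : Matrix l m R) (W : Matrix p q R) (S : Matrix q r R) :
    (X * K⁻¹) ⊗ₖ W * (K ⊗ₖ S) = X ⊗ₖ (W * S) := by
  rw [← mul_kronecker_mul, nonsing_inv_mul_cancel_right _ _ hK]

end Matrix

theorem gar_posterior_mean {Nl Nh dl dh : Type*}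
    [Fintype Nl] [Fintype Nh] [Fintype dl] [Fintype dh]
    [DecidableEq Nl] [DecidableEq Nh] [DecidableEq dl] [DecidableEq dh]
    (Kl : Matrix Nl Nl ℝ) (Sl : Matrix dl dl ℝ)
    (Kr : Matrix Nh Nh ℝ) (Sr : Matrix dh dh ℝ)
    (E : Matrix Nl Nh ℝ) (W : Matrix dh dl ℝ)
    (hKl : IsUnit Kl.det) (hSl : IsUnit Sl.det)
    (hKr : IsUnit Kr.det) (hSr : IsUnit Sr.det)
    (kls : Matrix Unit Nl ℝ) (krs : Matrix Unit Nh ℝ)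
    (yl : (Nl × dl) → ℝ) (yr : (Nh × dh) → ℝ) :
    let Cov : Matrix ((Nl × dl) ⊕ (Nh × dh)) ((Nl × dl) ⊕ (Nh × dh)) ℝ :=
      fromBlocks (Kl ⊗ₖ Sl) ((Kl * E) ⊗ₖ (Sl * Wᵀ)) ((Eᵀ * Kl) ⊗ₖ (W * Sl))
        ((Eᵀ * Kl * E) ⊗ₖ (W * Sl * Wᵀ) + Kr ⊗ₖ Sr)
    let C : Matrix (Unit × dh) ((Nl × dl) ⊕ (Nh × dh)) ℝ :=
      fromCols (kls ⊗ₖ (W * Sl)) ((kls * E) ⊗ₖ (W * Sl * Wᵀ) + krs ⊗ₖ Sr)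
    let y : ((Nl × dl) ⊕ (Nh × dh)) → ℝ :=
      Sum.elim yl ((Eᵀ ⊗ₖ W).mulVec yl + yr)
    C.mulVec (Cov⁻¹.mulVec y) =
      ((kls * Kl⁻¹) ⊗ₖ W).mulVec yl +
        ((krs * Kr⁻¹) ⊗ₖ (1 : Matrix dh dh ℝ)).mulVec yr := by
  intro Cov C y
  have hCov : Cov = fromBlocks (Kl ⊗ₖ Sl) ((Kl ⊗ₖ Sl) * (E ⊗ₖ Wᵀ))
      ((Eᵀ ⊗ₖ W) * (Kl ⊗ₖ Sl)) ((Eᵀ ⊗ₖ W) * (Kl ⊗ₖ Sl) * (E ⊗ₖ Wᵀ) + Kr ⊗ₖ Sr) := by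
    simp only [Cov, mul_kronecker_mul]
  have hC : C = fromCols ((kls * Kl⁻¹) ⊗ₖ W * (Kl ⊗ₖ Sl))
      ((kls * Kl⁻¹) ⊗ₖ W * (Kl ⊗ₖ Sl) * (E ⊗ₖ Wᵀ) +
        (krs * Kr⁻¹) ⊗ₖ (1 : Matrix dh dh ℝ) * (Kr ⊗ₖ Sr)) := by
    rw [mul_inv_kronecker_mul_kronecker hKl, mul_inv_kronecker_mul_kronecker hKr,
      Matrix.one_mul, ← mul_kronecker_mul]
  rw [hCov, hC]
  exact fromCols_mulVec_inv_fromBlocks_mulVec (isUnit_det_kronecker hKl hSl)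
    (isUnit_det_kronecker hKr hSr) _ _ _ _ yl yr
end

section
/- Let n, d : ℕ, let A : Matrix (Fin n) (Fin n) ℝ and D : Matrix (Fin d) (Fin d) ℝ be symmetric positive definite matrices, let Ψ : Matrix (Fin n) (Fin d) ℝ, φ : Fin n → ℝ, and m : Fin d → ℝ. Then ∫ z : (Fin d → ℝ), Real.exp (-(1/2) * (A⁻¹.mulVec (φ - Ψ.mulVec z) ⬝ᵥ (φ - Ψ.mulVec z))) * Real.exp (-(1/2) * (D⁻¹.mulVec (z - m) ⬝ᵥ (z - m))) dz = (2 * π) ^ ((d : ℝ) / 2) * (det (Ψᵀ * A⁻¹ * Ψ + D⁻¹)) ^ (-(1/2) : ℝ) * Real.exp (-(1/2) * ((A + Ψ * D * Ψᵀ)⁻¹.mulVec (φ - Ψ.mulVec m) ⬝ᵥ (φ - Ψ.mulVec m))), where the integral is with respect to the Lebesgue (product) measure on Fin d → ℝ. -/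
open Matrix MeasureTheory Real

/-!
With `B = Ψᵀ A⁻¹ Ψ + D⁻¹`, `e = φ - Ψ m` and `μ = m + B⁻¹ Ψᵀ A⁻¹ e`, completing the square in `z`
writes the exponent as `(z - μ)ᵀ B (z - μ) + eᵀ (A⁻¹ - A⁻¹ Ψ B⁻¹ Ψᵀ A⁻¹) e`, and the Woodbury
identity identifies the constant term with `eᵀ (A + Ψ D Ψᵀ)⁻¹ e`. The remaining Gaussian integral is computed by writing
`B = Sᵀ S` and substituting `y = S z`, which factors it into one-dimensional Gaussian integrals.
-/

section Gaussian

variable {ι : Type*} [Fintype ι]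

theorem integral_exp_neg_half_dotProduct_self :
    ∫ y : ι → ℝ, exp (-(1/2) * (y ⬝ᵥ y)) = (2 * π) ^ ((Fintype.card ι : ℝ) / 2) := by
  have hprod (y : ι → ℝ) : exp (-(1/2) * (y ⬝ᵥ y)) = ∏ i, exp (-(1/2) * y i ^ 2) := by
    simp only [← exp_sum, dotProduct, Finset.mul_sum, sq]
  have hline : ∫ x : ℝ, exp (-(1/2) * x ^ 2) = (2 * π) ^ ((1 : ℝ) / 2) := by
    rw [integral_gaussian, div_div_eq_mul_div, div_one, sqrt_eq_rpow, mul_comm]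
  simp_rw [hprod]
  rw [integral_fintype_prod_volume_eq_pow (fun x => exp (-(1/2) * x ^ 2)), hline,
    ← rpow_mul_natCast (by positivity)]
  ring_nf

open scoped MatrixOrder in
theorem integral_exp_neg_half_mulVec_dotProduct_self [DecidableEq ι] {B : Matrix ι ι ℝ}
    (hB : B.PosDef) :
    ∫ z : ι → ℝ, exp (-(1/2) * (B *ᵥ z ⬝ᵥ z)) =
      (2 * π) ^ ((Fintype.card ι : ℝ) / 2) * B.det ^ (-(1/2) : ℝ) := by
  have hdet_pos := hB.det_pos
  obtain ⟨S, rfl⟩ := CStarAlgebra.nonneg_iff_eq_star_mul_self.mp hB.posSemidef.nonneg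
  have hdet : (star S * S).det = S.det ^ 2 := by
    rw [det_mul, star_eq_conjTranspose, det_conjTranspose, star_trivial, sq]
  have hS : S.det ≠ 0 := by rintro h; simp [hdet, h] at hdet_pos
  have hquad (z : ι → ℝ) : (star S * S) *ᵥ z ⬝ᵥ z = S *ᵥ z ⬝ᵥ S *ᵥ z := by
    rw [← mulVec_mulVec, star_eq_conjTranspose, conjTranspose_eq_transpose_of_trivial,
      mulVec_transpose, ← dotProduct_mulVec, dotProduct_comm]
  have hmeas : Measurable (toLin' S) := (LinearMap.continuous_on_pi _).measurable
  calc ∫ z : ι → ℝ, exp (-(1/2) * ((star S * S) *ᵥ z ⬝ᵥ z))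
      = ∫ y : ι → ℝ, exp (-(1/2) * (y ⬝ᵥ y)) ∂(Measure.map (toLin' S) volume) := by
        rw [integral_map hmeas.aemeasurable (by fun_prop)]
        simp_rw [hquad, toLin'_apply]
    _ = |S.det|⁻¹ * (2 * π) ^ ((Fintype.card ι : ℝ) / 2) := by
        rw [map_matrix_volume_pi_eq_smul_volume_pi hS, integral_smul_measure,
          integral_exp_neg_half_dotProduct_self, ENNReal.toReal_ofReal (by positivity), abs_inv,
          smul_eq_mul]
    _ = _ := by
        rw [hdet, mul_comm, rpow_neg (by positivity), ← sqrt_eq_rpow, sqrt_sq_eq_abs]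

end Gaussian

namespace Matrix

variable {R m n : Type*} [CommRing R] [Fintype m] [Fintype n]

theorem IsSymm.mulVec_dotProduct_comm {M : Matrix n n R} (hM : M.IsSymm) (a b : n → R) :
    M *ᵥ a ⬝ᵥ b = M *ᵥ b ⬝ᵥ a := by
  rw [dotProduct_comm, dotProduct_mulVec, ← mulVec_transpose, hM.eq]

theorem IsSymm.mulVec_sub_dotProduct_sub {M : Matrix n n R} (hM : M.IsSymm)
    (a b : n → R) :
    M *ᵥ (a - b) ⬝ᵥ (a - b) = M *ᵥ a ⬝ᵥ a - 2 * (M *ᵥ a ⬝ᵥ b) + M *ᵥ b ⬝ᵥ b := by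
  rw [mulVec_sub, sub_dotProduct, dotProduct_sub, dotProduct_sub, hM.mulVec_dotProduct_comm b a]
  ring

theorem IsSymm.mulVec_dotProduct_sub_two_mul_dotProduct [DecidableEq n] {B : Matrix n n R}
    (hB : B.IsSymm) (hdet : IsUnit B.det) (w t : n → R) :
    B *ᵥ w ⬝ᵥ w - 2 * (t ⬝ᵥ w) =
      B *ᵥ (w - B⁻¹ *ᵥ t) ⬝ᵥ (w - B⁻¹ *ᵥ t) - B⁻¹ *ᵥ t ⬝ᵥ t := by
  have hBt : B *ᵥ (B⁻¹ *ᵥ t) = t := by rw [mulVec_mulVec, mul_nonsing_inv B hdet, one_mulVec]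
  rw [hB.mulVec_sub_dotProduct_sub, hB.mulVec_dotProduct_comm w (B⁻¹ *ᵥ t), hBt,
    dotProduct_comm t (B⁻¹ *ᵥ t)]
  ring

theorem mulVec_sub_mulVec_dotProduct_add {P : Matrix m m R} (hP : P.IsSymm) (Q : Matrix n n R)
    (Ψ : Matrix m n R) (e : m → R) (w : n → R) :
    P *ᵥ (e - Ψ *ᵥ w) ⬝ᵥ (e - Ψ *ᵥ w) + Q *ᵥ w ⬝ᵥ w =
      (Ψᵀ * P * Ψ + Q) *ᵥ w ⬝ᵥ w - 2 * (Ψᵀ *ᵥ (P *ᵥ e) ⬝ᵥ w) + P *ᵥ e ⬝ᵥ e := by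
  have hcross : P *ᵥ e ⬝ᵥ Ψ *ᵥ w = Ψᵀ *ᵥ (P *ᵥ e) ⬝ᵥ w := by
    rw [dotProduct_mulVec, ← mulVec_transpose]
  have hquad : P *ᵥ (Ψ *ᵥ w) ⬝ᵥ Ψ *ᵥ w = (Ψᵀ * P * Ψ) *ᵥ w ⬝ᵥ w := by
    rw [dotProduct_mulVec, ← mulVec_transpose, mulVec_mulVec, mulVec_mulVec, Matrix.mul_assoc]
  rw [hP.mulVec_sub_dotProduct_sub, hcross, hquad, add_mulVec, add_dotProduct]
  ring

theorem inv_add_mul_mul_transpose_mulVec_dotProduct [DecidableEq m] [DecidableEq n]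
    {A : Matrix m m R} (hA_symm : A.IsSymm) (hA : IsUnit A) {D : Matrix n n R} (hD : IsUnit D)
    (Ψ : Matrix m n R) (hB : IsUnit (Ψᵀ * A⁻¹ * Ψ + D⁻¹)) (e : m → R) :
    (A + Ψ * D * Ψᵀ)⁻¹ *ᵥ e ⬝ᵥ e =
      A⁻¹ *ᵥ e ⬝ᵥ e -
        (Ψᵀ * A⁻¹ * Ψ + D⁻¹)⁻¹ *ᵥ (Ψᵀ *ᵥ (A⁻¹ *ᵥ e)) ⬝ᵥ Ψᵀ *ᵥ (A⁻¹ *ᵥ e) := by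
  have hAinv : A⁻¹ᵀ = A⁻¹ := by rw [transpose_nonsing_inv, hA_symm.eq]
  rw [add_mul_mul_inv_eq_sub A Ψ D Ψᵀ hA hD (by rwa [add_comm]), add_comm D⁻¹, sub_mulVec,
    sub_dotProduct]
  congr 1
  rw [dotProduct_mulVec _ _ (A⁻¹ *ᵥ e), ← mulVec_transpose, transpose_transpose,
    dotProduct_mulVec, ← mulVec_transpose, hAinv]
  simp only [mulVec_mulVec, Matrix.mul_assoc]

end Matrix

theorem gaussian_marginalization (n d : ℕ)
    (A : Matrix (Fin n) (Fin n) ℝ) (hA : A.PosDef)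
    (D : Matrix (Fin d) (Fin d) ℝ) (hD : D.PosDef)
    (Ψ : Matrix (Fin n) (Fin d) ℝ) (φ : Fin n → ℝ) (m : Fin d → ℝ) :
    ∫ z : Fin d → ℝ,
        Real.exp (-(1/2) * (A⁻¹.mulVec (φ - Ψ.mulVec z) ⬝ᵥ (φ - Ψ.mulVec z))) *
          Real.exp (-(1/2) * (D⁻¹.mulVec (z - m) ⬝ᵥ (z - m))) =
      (2 * π) ^ ((d : ℝ) / 2) * (Ψᵀ * A⁻¹ * Ψ + D⁻¹).det ^ (-(1/2) : ℝ) *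
        Real.exp (-(1/2) *
          ((A + Ψ * D * Ψᵀ)⁻¹.mulVec (φ - Ψ.mulVec m) ⬝ᵥ (φ - Ψ.mulVec m))) := by
  set B := Ψᵀ * A⁻¹ * Ψ + D⁻¹
  set e := φ - Ψ *ᵥ m
  set μ := m + B⁻¹ *ᵥ (Ψᵀ *ᵥ (A⁻¹ *ᵥ e))
  have hB : B.PosDef := by
    refine PosDef.posSemidef_add ?_ hD.inv
    simpa using hA.inv.posSemidef.conjTranspose_mul_mul_same Ψ
  have hsymm {k : ℕ} {M : Matrix (Fin k) (Fin k) ℝ} (hM : M.PosDef) : M.IsSymm :=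
    isHermitian_iff_isSymm.mp hM.isHermitian
  have hexponent (z : Fin d → ℝ) :
      A⁻¹ *ᵥ (φ - Ψ *ᵥ z) ⬝ᵥ (φ - Ψ *ᵥ z) + D⁻¹ *ᵥ (z - m) ⬝ᵥ (z - m) =
        B *ᵥ (z - μ) ⬝ᵥ (z - μ) + (A + Ψ * D * Ψᵀ)⁻¹ *ᵥ e ⬝ᵥ e := by
    have hres : φ - Ψ *ᵥ z = e - Ψ *ᵥ (z - m) := by simp only [e, mulVec_sub]; abel
    have hshift : z - μ = z - m - B⁻¹ *ᵥ (Ψᵀ *ᵥ (A⁻¹ *ᵥ e)) := sub_add_eq_sub_sub z m _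
    rw [hres, mulVec_sub_mulVec_dotProduct_add (hsymm hA.inv),
      (hsymm hB).mulVec_dotProduct_sub_two_mul_dotProduct hB.det_pos.ne'.isUnit,
      inv_add_mul_mul_transpose_mulVec_dotProduct (hsymm hA) hA.isUnit hD.isUnit Ψ
        hB.isUnit, hshift]
    ring
  calc _ = ∫ z : Fin d → ℝ, exp (-(1/2) * (B *ᵥ (z - μ) ⬝ᵥ (z - μ))) *
          exp (-(1/2) * ((A + Ψ * D * Ψᵀ)⁻¹ *ᵥ e ⬝ᵥ e)) := by
        congr 1 with z
        rw [← exp_add, ← exp_add, ← mul_add, ← mul_add, hexponent]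
    _ = _ := by
        rw [integral_mul_const, integral_sub_right_eq_self (fun y ↦ exp (-(1/2) * (B *ᵥ y ⬝ᵥ y))),
          integral_exp_neg_half_mulVec_dotProduct_self hB, Fintype.card_fin]
end
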